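/- Let f : ℝⁿ → ℝⁿ be continuously differentiable with λ∞(Df(z)) ≤ Λ for all z ∈ ℝⁿ, let g_i : ℝⁿ → ℝⁿ (i = 1,…,m) be continuous with ‖g_i(z)‖ ≤ K_i for all z, let v_i be measurable with |v_i(t)| ≤ V_i, and let w_i be continuous with |w_i(t)| ≤ r·V_i for some r ≥ 0. Let x be a solution of ẋ = f(x) + Σ_i g_i(x)v_i(t) and y a solution of ẏ = f(y) + Σ_i g_i(y)w_i(t) on [t_k, t_k+h] with y(t_k) = x(t_k). Then for all t ∈ [t_k, t_k+h], ‖x(t) − y(t)‖ ≤ h·(1+r)·K'·φ(Λh), where K' = Σ_{i=1}^m V_i K_i. -/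

import Mathlib

open MeasureTheory Set

/-- `φ(x) = (eˣ − 1)/x` for `x ≠ 0`, `φ(0) = 1`. -/
noncomputable def phi (x : ℝ) : ℝ := if x = 0 then 1 else (Real.exp x - 1) / x

/-- The logarithmic norm `λ∞(A) = max_k ( a_{kk} + Σ_{i≠k} |a_{ki}| )` of a linear map on
`ℝⁿ` with the supremum norm, expressed via its matrix entries `a_{ki} = (A eᵢ)_k`. -/
noncomputable def logNormInf {n : ℕ} (A : (Fin n → ℝ) →L[ℝ] (Fin n → ℝ)) : ℝ :=
  ⨆ k, (A (Pi.single k 1) k + ∑ i ∈ Finset.univ.erase k, |A (Pi.single i 1) k|)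

/-!
For `e = x - y` one has `e t' = e t + ∫ₜᵗ' (f (x τ) - f (y τ) + p τ)` with
`‖p‖ ≤ (1 + r) K'`. The bound `λ∞(Df) ≤ Λ` gives `‖I + s Df‖ ≤ 1 + sΛ` for small `s ≥ 0`
(row sums of the sup-norm operator norm), so by the mean value inequality
`‖e + s (f x - f y)‖ ≤ (1 + sΛ) ‖e‖`. Hence the right Dini derivative of `‖e‖` is at most
`Λ ‖e‖ + (1 + r) K'`, and Grönwall's inequality with `e t_k = 0` bounds `‖e t‖` by
`(t - t_k) (1 + r) K' φ(Λ (t - t_k)) ≤ h (1 + r) K' φ(Λ h)`.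
-/

open Filter Topology

lemma gronwallBound_zero_eq_mul_phi (K ε x : ℝ) : gronwallBound 0 K ε x = x * ε * phi (K * x) := by
  unfold gronwallBound phi
  rcases eq_or_ne K 0 with rfl | hK
  · simp [mul_comm]
  rcases eq_or_ne x 0 with rfl | hx
  · simp
  rw [if_neg hK, if_neg (mul_ne_zero hK hx)]
  field_simp
  ring

lemma gronwallBound_zero_monotone {K ε : ℝ} (hε : 0 ≤ ε) : Monotone (gronwallBound 0 K ε) := by
  intro x₁ x₂ hx
  unfold gronwallBound
  split_ifs with hK
  · gcongr
  rcases lt_or_gt_of_ne hK with hK | hK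
  · have : ε / K ≤ 0 := div_nonpos_of_nonneg_of_nonpos hε hK.le
    have : Real.exp (K * x₂) ≤ Real.exp (K * x₁) := Real.exp_le_exp.2 (by nlinarith)
    nlinarith
  · gcongr

section LogNorm

variable {n : ℕ} (A : (Fin n → ℝ) →L[ℝ] (Fin n → ℝ))

lemma apply_eq_sum_mul_apply_single (z : Fin n → ℝ) (k : Fin n) :
    A z k = ∑ i, z i * A (Pi.single i 1) k := by
  conv_lhs => rw [← Finset.univ_sum_single z]
  simp only [map_sum, Finset.sum_apply]
  refine Finset.sum_congr rfl fun i _ => ?_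
  rw [← smul_eq_mul, ← Pi.smul_apply, ← map_smul, ← Pi.single_smul, smul_eq_mul, mul_one]

lemma le_logNormInf (k : Fin n) :
    A (Pi.single k 1) k + ∑ i ∈ Finset.univ.erase k, |A (Pi.single i 1) k| ≤ logNormInf A :=
  le_ciSup (f := fun k => A (Pi.single k 1) k + ∑ i ∈ Finset.univ.erase k, |A (Pi.single i 1) k|)
    (Set.finite_range _).bddAbove k

lemma abs_apply_single_le_opNorm (i k : Fin n) : |A (Pi.single i 1) k| ≤ ‖A‖ := by
  calc |A (Pi.single i 1) k| ≤ ‖A (Pi.single i 1)‖ := norm_le_pi_norm (A (Pi.single i 1)) k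
    _ ≤ ‖A‖ * ‖(Pi.single i 1 : Fin n → ℝ)‖ := A.le_opNorm _
    _ = ‖A‖ := by rw [Pi.norm_single, norm_one, mul_one]

variable {A} {s : ℝ}

lemma one_add_mul_logNormInf_nonneg (hs : 0 ≤ s) (hsA : s * ‖A‖ ≤ 1) :
    0 ≤ 1 + s * logNormInf A := by
  cases isEmpty_or_nonempty (Fin n) with
  | inl _ => simp [logNormInf, Real.iSup_of_isEmpty]
  | inr hne =>
    obtain ⟨k⟩ := hne
    have hdiag := neg_le_of_abs_le (abs_apply_single_le_opNorm A k k)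
    have hoff : 0 ≤ ∑ i ∈ Finset.univ.erase k, |A (Pi.single i 1) k| :=
      Finset.sum_nonneg fun _ _ => abs_nonneg _
    nlinarith [le_logNormInf A k]

lemma norm_add_smul_apply_le (hs : 0 ≤ s) (hsA : s * ‖A‖ ≤ 1) (z : Fin n → ℝ) :
    ‖z + s • A z‖ ≤ (1 + s * logNormInf A) * ‖z‖ := by
  refine (pi_norm_le_iff_of_nonneg
    (mul_nonneg (one_add_mul_logNormInf_nonneg hs hsA) (norm_nonneg z))).2 fun k => ?_
  have hdiag : 0 ≤ 1 + s * A (Pi.single k 1) k := by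
    nlinarith [neg_le_of_abs_le (abs_apply_single_le_opNorm A k k)]
  have hz : ∀ i, |z i| ≤ ‖z‖ := fun i => norm_le_pi_norm z i
  have hoff : |∑ i ∈ Finset.univ.erase k, z i * A (Pi.single i 1) k|
      ≤ ‖z‖ * ∑ i ∈ Finset.univ.erase k, |A (Pi.single i 1) k| := by
    rw [Finset.mul_sum]
    refine (Finset.abs_sum_le_sum_abs _ _).trans (Finset.sum_le_sum fun i _ => ?_)
    rw [abs_mul]
    exact mul_le_mul_of_nonneg_right (hz i) (abs_nonneg _)
  have hsplit : (z + s • A z) k = (1 + s * A (Pi.single k 1) k) * z k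
      + s * ∑ i ∈ Finset.univ.erase k, z i * A (Pi.single i 1) k := by
    simp only [Pi.add_apply, Pi.smul_apply, smul_eq_mul, apply_eq_sum_mul_apply_single A z k,
      ← Finset.add_sum_erase _ _ (Finset.mem_univ k)]
    ring
  calc ‖(z + s • A z) k‖
      ≤ (1 + s * A (Pi.single k 1) k) * |z k|
        + s * |∑ i ∈ Finset.univ.erase k, z i * A (Pi.single i 1) k| := by
        rw [Real.norm_eq_abs, hsplit]
        refine (abs_add_le _ _).trans_eq ?_
        rw [abs_mul, abs_mul, abs_of_nonneg hdiag, abs_of_nonneg hs]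
    _ ≤ (1 + s * A (Pi.single k 1) k) * ‖z‖
        + s * (‖z‖ * ∑ i ∈ Finset.univ.erase k, |A (Pi.single i 1) k|) := by
        gcongr
        exact hz k
    _ ≤ (1 + s * logNormInf A) * ‖z‖ := by
        nlinarith [mul_le_mul_of_nonneg_left (le_logNormInf A k) hs, norm_nonneg z]

lemma opNorm_id_add_smul_le (hs : 0 ≤ s) (hsA : s * ‖A‖ ≤ 1) :
    ‖ContinuousLinearMap.id ℝ _ + s • A‖ ≤ 1 + s * logNormInf A :=
  ContinuousLinearMap.opNorm_le_bound _ (one_add_mul_logNormInf_nonneg hs hsA)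
    (norm_add_smul_apply_le hs hsA)

end LogNorm

theorem exists_norm_sub_add_smul_sub_le {n : ℕ} {f : (Fin n → ℝ) → (Fin n → ℝ)} {Λ : ℝ}
    (hf : ContDiff ℝ 1 f) (hΛ : ∀ z, logNormInf (fderiv ℝ f z) ≤ Λ) (a b : Fin n → ℝ) :
    ∃ s₀ > 0, ∀ s ∈ Ioo 0 s₀, ‖(a - b) + s • (f a - f b)‖ ≤ (1 + s * Λ) * ‖a - b‖ := by
  let B := Metric.closedBall b ‖a - b‖
  have ha : a ∈ B := by simp [B, dist_eq_norm]
  have hb : b ∈ B := Metric.mem_closedBall_self (norm_nonneg _)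
  obtain ⟨M, hM⟩ := (isCompact_closedBall b ‖a - b‖).exists_bound_of_continuousOn
    (hf.continuous_fderiv one_ne_zero).continuousOn
  have hM0 : 0 ≤ M := (norm_nonneg _).trans (hM b hb)
  refine ⟨1 / (M + 1), by positivity, fun s hs => ?_⟩
  -- `s ‖Df‖ ≤ 1` keeps the diagonal of `I + s Df` nonnegative, so its norm is `1 + s λ∞(Df)`
  -- at most.
  have hsM : ∀ p ∈ B, s * ‖fderiv ℝ f p‖ ≤ 1 := fun p hp => by
    have := (lt_div_iff₀ (by positivity : (0:ℝ) < M + 1)).1 hs.2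
    nlinarith [hM p hp, hs.1]
  have hG : ∀ p, HasFDerivAt (fun p => p + s • f p)
      (ContinuousLinearMap.id ℝ _ + s • fderiv ℝ f p) p := fun p =>
    (hasFDerivAt_id p).add ((hf.differentiable one_ne_zero p).hasFDerivAt.const_smul s)
  have hGbound : ∀ p ∈ B, ‖fderiv ℝ (fun p => p + s • f p) p‖ ≤ 1 + s * Λ := fun p hp => by
    rw [(hG p).fderiv]
    exact (opNorm_id_add_smul_le hs.1.le (hsM p hp)).trans
      (by gcongr; exacts [hs.1.le, hΛ p])
  have := Convex.norm_image_sub_le_of_norm_fderiv_le (fun p _ => (hG p).differentiableAt)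
    hGbound (convex_closedBall b _) hb ha
  calc ‖(a - b) + s • (f a - f b)‖ = ‖(a + s • f a) - (b + s • f b)‖ := by
        rw [smul_sub]; abel_nf
    _ ≤ (1 + s * Λ) * ‖a - b‖ := this

section Gronwall

variable {E : Type*} [NormedAddCommGroup E] [NormedSpace ℝ E]

lemma integrableOn_Icc_comp_add_sum_smul {ι : Type*} [Fintype ι] {F : E → E} {g : ι → E → E}
    {u : ι → ℝ → ℝ} {C : ι → ℝ} {ξ : ℝ → E} {a b : ℝ} (hF : Continuous F)
    (hg : ∀ i, Continuous (g i)) (hu : ∀ i, AEStronglyMeasurable (u i))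
    (huC : ∀ i, ∀ τ ∈ Icc a b, |u i τ| ≤ C i) (hξ : ContinuousOn ξ (Icc a b)) :
    IntegrableOn (fun τ => F (ξ τ) + ∑ i, u i τ • g i (ξ τ)) (Icc a b) :=
  (hF.comp_continuousOn hξ).integrableOn_Icc.add <| integrable_finsetSum _ fun i _ =>
    (Measure.integrableOn_of_bounded measure_Icc_lt_top.ne (hu i)
      (ae_restrict_of_forall_mem measurableSet_Icc (huC i))).smul_continuousOn
      ((hg i).comp_continuousOn hξ) isCompact_Icc

lemma eq_add_integral_of_eq_add_integral {x F : ℝ → E} {a b : ℝ}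
    (hF : IntegrableOn F (Icc a b)) (hx : ∀ t ∈ Icc a b, x t = x a + ∫ τ in a..t, F τ) :
    ∀ t ∈ Icc a b, ∀ t' ∈ Icc a b, x t' = x t + ∫ τ in t..t', F τ := by
  intro t ht t' ht'
  have hab : a ∈ Icc a b := ⟨le_rfl, ht.1.trans ht.2⟩
  rw [hx t' ht', hx t ht, add_assoc, intervalIntegral.integral_add_adjacent_intervals
    (hF.mono_set (uIcc_subset_Icc hab ht)).intervalIntegrable
    (hF.mono_set (uIcc_subset_Icc ht ht')).intervalIntegrable]

lemma sub_eq_sub_add_integral_sub {x y F G : ℝ → E} {a b : ℝ}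
    (hF : IntegrableOn F (Icc a b)) (hG : IntegrableOn G (Icc a b))
    (hx : ∀ t ∈ Icc a b, x t = x a + ∫ τ in a..t, F τ)
    (hy : ∀ t ∈ Icc a b, y t = y a + ∫ τ in a..t, G τ) :
    ∀ t ∈ Icc a b, ∀ t' ∈ Icc a b, x t' - y t' = x t - y t + ∫ τ in t..t', (F τ - G τ) := by
  intro t ht t' ht'
  have hI := uIcc_subset_Icc ht ht'
  rw [eq_add_integral_of_eq_add_integral hF hx t ht t' ht',
    eq_add_integral_of_eq_add_integral hG hy t ht t' ht', add_sub_add_comm,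
    intervalIntegral.integral_sub (hF.mono_set hI).intervalIntegrable
      (hG.mono_set hI).intervalIntegrable]

lemma eventually_norm_integral_sub_smul_le [CompleteSpace E] {q p : ℝ → E} {a b t ε η : ℝ}
    (hq : ContinuousOn q (Icc a b)) (hqp : IntegrableOn (fun τ => q τ + p τ) (Icc a b))
    (hp : ∀ τ ∈ Icc a b, ‖p τ‖ ≤ ε) (ht : t ∈ Ico a b) (hη : 0 < η) :
    ∀ᶠ t' in 𝓝[>] t, ‖(∫ τ in t..t', (q τ + p τ)) - (t' - t) • q t‖ ≤ (ε + η) * (t' - t) := by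
  obtain ⟨δ, hδ, hqδ⟩ := Metric.continuousWithinAt_iff.1 (hq t (Ico_subset_Icc_self ht)) η hη
  filter_upwards [Ioo_mem_nhdsGT (lt_min (lt_add_of_pos_right t hδ) ht.2)] with t' ht'
  have htt' : t ≤ t' := ht'.1.le
  have hsub : Ioc t t' ⊆ Icc a b := fun τ hτ =>
    ⟨ht.1.trans hτ.1.le, hτ.2.trans (ht'.2.le.trans (min_le_right _ _))⟩
  have hint : IntervalIntegrable (fun τ => q τ + p τ) volume t t' := by
    rw [intervalIntegrable_iff_integrableOn_Ioc_of_le htt']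
    exact hqp.mono_set hsub
  have hbound : ∀ τ ∈ uIoc t t', ‖q τ + p τ - q t‖ ≤ ε + η := fun τ hτ => by
    rw [uIoc_of_le htt'] at hτ
    have hdist : dist τ t < δ := by
      rw [Real.dist_eq, abs_of_pos (sub_pos.2 hτ.1)]
      linarith [hτ.2, ht'.2.trans_le (min_le_left _ _)]
    have := hqδ (hsub hτ) hdist
    rw [dist_eq_norm] at this
    calc ‖q τ + p τ - q t‖ ≤ ‖q τ - q t‖ + ‖p τ‖ := by
          rw [add_sub_right_comm]; exact norm_add_le _ _
      _ ≤ ε + η := by linarith [hp τ (hsub hτ)]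
  calc ‖(∫ τ in t..t', (q τ + p τ)) - (t' - t) • q t‖
      = ‖∫ τ in t..t', (q τ + p τ - q t)‖ := by
        rw [intervalIntegral.integral_sub hint intervalIntegrable_const,
          intervalIntegral.integral_const]
    _ ≤ (ε + η) * |t' - t| := intervalIntegral.norm_integral_le_of_norm_le_const hbound
    _ = (ε + η) * (t' - t) := by rw [abs_of_nonneg (sub_nonneg.2 htt')]

theorem norm_sub_le_gronwallBound_of_eq_add_integral [CompleteSpace E] {f : E → E} {x y p : ℝ → E}
    {Λ ε a b : ℝ} (hf : Continuous f)
    (hΛ : ∀ u z : E, ∃ s₀ > 0, ∀ s ∈ Ioo 0 s₀,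
      ‖(u - z) + s • (f u - f z)‖ ≤ (1 + s * Λ) * ‖u - z‖)
    (hx : ContinuousOn x (Icc a b)) (hy : ContinuousOn y (Icc a b))
    (hint : IntegrableOn (fun τ => f (x τ) - f (y τ) + p τ) (Icc a b))
    (hp : ∀ τ ∈ Icc a b, ‖p τ‖ ≤ ε)
    (hxy : ∀ t ∈ Icc a b, ∀ t' ∈ Icc a b,
      x t' - y t' = x t - y t + ∫ τ in t..t', (f (x τ) - f (y τ) + p τ)) :
    ∀ t ∈ Icc a b, ‖x t - y t‖ ≤ gronwallBound ‖x a - y a‖ Λ ε (t - a) := by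
  refine le_gronwallBound_of_liminf_deriv_right_le (f' := fun t => Λ * ‖x t - y t‖ + ε)
    (hx.sub hy).norm (fun t ht ρ hρ => ?_) le_rfl fun _ _ => le_rfl
  obtain ⟨s₀, hs₀, hΛt⟩ := hΛ (x t) (y t)
  set η := ρ - (Λ * ‖x t - y t‖ + ε)
  have hq : ContinuousOn (fun τ => f (x τ) - f (y τ)) (Icc a b) :=
    (hf.comp_continuousOn hx).sub (hf.comp_continuousOn hy)
  refine Eventually.frequently ?_
  filter_upwards [eventually_norm_integral_sub_smul_le hq hint hp ht (half_pos (sub_pos.2 hρ)),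
    Ioo_mem_nhdsGT (lt_min (lt_add_of_pos_right t hs₀) ht.2)] with t' hdev ht'
  have hs : t' - t ∈ Ioo 0 s₀ :=
    ⟨sub_pos.2 ht'.1, by linarith [ht'.2.trans_le (min_le_left _ _)]⟩
  have ht'I : t' ∈ Icc a b := ⟨ht.1.trans ht'.1.le, (ht'.2.trans_le (min_le_right _ _)).le⟩
  have hnorm : ‖x t' - y t'‖ ≤ (1 + (t' - t) * Λ) * ‖x t - y t‖ + (ε + η / 2) * (t' - t) := by
    rw [hxy t (Ico_subset_Icc_self ht) t' ht'I]
    calc _ = ‖(x t - y t + (t' - t) • (f (x t) - f (y t)))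
          + ((∫ τ in t..t', (f (x τ) - f (y τ) + p τ)) - (t' - t) • (f (x t) - f (y t)))‖ := by
          congr 1; abel
      _ ≤ _ := (norm_add_le _ _).trans (add_le_add (hΛt _ hs) hdev)
  rw [inv_mul_lt_iff₀ hs.1]
  nlinarith [hs.1]

end Gronwall

lemma norm_sum_smul_sub_smul_le {E ι : Type*} [SeminormedAddCommGroup E] [NormedSpace ℝ E]
    [Fintype ι] {v w V W K : ι → ℝ} {a b : ι → E} (hv : ∀ i, |v i| ≤ V i) (hw : ∀ i, |w i| ≤ W i)
    (ha : ∀ i, ‖a i‖ ≤ K i) (hb : ∀ i, ‖b i‖ ≤ K i) :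
    ‖∑ i, (v i • a i - w i • b i)‖ ≤ ∑ i, (V i + W i) * K i := by
  refine (norm_sum_le _ _).trans (Finset.sum_le_sum fun i _ => ?_)
  calc ‖v i • a i - w i • b i‖ ≤ |v i| * ‖a i‖ + |w i| * ‖b i‖ := by
        simpa only [norm_smul, Real.norm_eq_abs] using norm_sub_le (v i • a i) (w i • b i)
    _ ≤ V i * K i + W i * K i := by
        gcongr
        exacts [(abs_nonneg _).trans (hv i), hv i, ha i, (abs_nonneg _).trans (hw i), hw i, hb i]
    _ = (V i + W i) * K i := by ring

theorem solutions_difference_bound_general {n m : ℕ}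
    (f : (Fin n → ℝ) → (Fin n → ℝ)) (g : Fin m → (Fin n → ℝ) → (Fin n → ℝ))
    (v : Fin m → ℝ → ℝ) (w : Fin m → ℝ → ℝ)
    (K : Fin m → ℝ) (V : Fin m → ℝ) (Λ r : ℝ) (tk h : ℝ)
    (x y : ℝ → Fin n → ℝ)
    (hf : ContDiff ℝ 1 f)
    (hΛ : ∀ z, logNormInf (fderiv ℝ f z) ≤ Λ)
    (hg : ∀ i, Continuous (g i))
    (hK : ∀ i z, ‖g i z‖ ≤ K i)
    (hv : ∀ i, Measurable (v i))
    (hV : ∀ i, ∀ t ∈ Icc tk (tk + h), |v i t| ≤ V i)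
    (hwc : ∀ i, Continuous (w i))
    (hW : ∀ i, ∀ t ∈ Icc tk (tk + h), |w i t| ≤ r * V i)
    (hxc : ContinuousOn x (Icc tk (tk + h)))
    (hx : ∀ t ∈ Icc tk (tk + h),
      x t = x tk + ∫ s in tk..t, (f (x s) + ∑ i, v i s • g i (x s)))
    (hyc : ContinuousOn y (Icc tk (tk + h)))
    (hy : ∀ t ∈ Icc tk (tk + h),
      y t = y tk + ∫ s in tk..t, (f (y s) + ∑ i, w i s • g i (y s)))
    (hinit : y tk = x tk) :
    ∀ t ∈ Icc tk (tk + h),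
      ‖x t - y t‖ ≤ h * (1 + r) * (∑ i, V i * K i) * phi (Λ * h) := by
  intro t ht
  set ε := (1 + r) * ∑ i, V i * K i
  set p : ℝ → Fin n → ℝ := fun τ => ∑ i, (v i τ • g i (x τ) - w i τ • g i (y τ))
  have hp : ∀ τ ∈ Icc tk (tk + h), ‖p τ‖ ≤ ε := fun τ hτ =>
    (norm_sum_smul_sub_smul_le (fun i => hV i τ hτ) (fun i => hW i τ hτ) (fun i => hK i _)
      fun i => hK i _).trans_eq
      (by simp only [ε, Finset.mul_sum]; exact Finset.sum_congr rfl fun i _ => by ring)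
  have hFx := integrableOn_Icc_comp_add_sum_smul hf.continuous hg
    (fun i => (hv i).aestronglyMeasurable) hV hxc
  have hFy := integrableOn_Icc_comp_add_sum_smul hf.continuous hg
    (fun i => (hwc i).aestronglyMeasurable) hW hyc
  have hFG : ∀ τ, f (x τ) + ∑ i, v i τ • g i (x τ) - (f (y τ) + ∑ i, w i τ • g i (y τ))
      = f (x τ) - f (y τ) + p τ := fun τ => by
    simp only [p, Finset.sum_sub_distrib]
    abel
  have hεh := norm_sub_le_gronwallBound_of_eq_add_integral hf.continuous
    (exists_norm_sub_add_smul_sub_le hf hΛ) hxc hyc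
    ((hFx.sub hFy).congr_fun (fun τ _ => hFG τ) measurableSet_Icc) hp
    (by simpa only [hFG] using sub_eq_sub_add_integral_sub hFx hFy hx hy) t ht
  rw [hinit, sub_self, norm_zero] at hεh
  calc ‖x t - y t‖ ≤ gronwallBound 0 Λ ε (t - tk) := hεh
    _ ≤ gronwallBound 0 Λ ε h :=
      gronwallBound_zero_monotone ((norm_nonneg _).trans (hp t ht)) (by linarith [ht.2])
    _ = h * (1 + r) * (∑ i, V i * K i) * phi (Λ * h) := by
      rw [gronwallBound_zero_eq_mul_phi, mul_comm Λ]; ring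

/-- If `λ∞(Df(z)) ≤ Λ`, `‖gᵢ(z)‖ ≤ Kᵢ`, `|vᵢ(t)| ≤ Vᵢ`, `|wᵢ(t)| ≤ r·Vᵢ`
with `r ≥ 0`, `x` solves `ẋ = f(x) + Σᵢ gᵢ(x)vᵢ(t)` and `y` solves
`ẏ = f(y) + Σᵢ gᵢ(y)wᵢ(t)` on `[t_k, t_k+h]` with `y(t_k) = x(t_k)`, then for all
`t ∈ [t_k, t_k+h]`, `‖x(t) − y(t)‖ ≤ h·(1+r)·K'·φ(Λh)` with `K' = Σᵢ VᵢKᵢ`. -/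
theorem solutions_difference_bound {n m : ℕ}
    (f : (Fin n → ℝ) → (Fin n → ℝ)) (g : Fin m → (Fin n → ℝ) → (Fin n → ℝ))
    (v : Fin m → ℝ → ℝ) (w : Fin m → ℝ → ℝ)
    (K : Fin m → ℝ) (V : Fin m → ℝ) (Λ r : ℝ) (tk h : ℝ)
    (x y : ℝ → Fin n → ℝ)
    (hh : 0 < h) (hr : 0 ≤ r)
    (hf : ContDiff ℝ 1 f)
    (hΛ : ∀ z, logNormInf (fderiv ℝ f z) ≤ Λ)
    (hg : ∀ i, Continuous (g i))
    (hK : ∀ i z, ‖g i z‖ ≤ K i)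
    (hv : ∀ i, Measurable (v i))
    (hV : ∀ i, ∀ t ∈ Icc tk (tk + h), |v i t| ≤ V i)
    (hwc : ∀ i, Continuous (w i))
    (hW : ∀ i, ∀ t ∈ Icc tk (tk + h), |w i t| ≤ r * V i)
    (hxc : ContinuousOn x (Icc tk (tk + h)))
    (hx : ∀ t ∈ Icc tk (tk + h),
      x t = x tk + ∫ s in tk..t, (f (x s) + ∑ i, v i s • g i (x s)))
    (hyc : ContinuousOn y (Icc tk (tk + h)))
    (hy : ∀ t ∈ Icc tk (tk + h),
      y t = y tk + ∫ s in tk..t, (f (y s) + ∑ i, w i s • g i (y s)))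
    (hinit : y tk = x tk) :
    ∀ t ∈ Icc tk (tk + h),
      ‖x t - y t‖ ≤ h * (1 + r) * (∑ i, V i * K i) * phi (Λ * h) :=
  solutions_difference_bound_general f g v w K V Λ r tk h x y hf hΛ hg hK hv hV hwc hW hxc hx hyc hy
    hinit
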